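/- arXiv:2202.00708 — 2 statements merged into one kernel-verified Lean document; each statement's English description precedes it below -/
import Mathlib

section
/- Let α be a composition of n. (a) If T ∈ SIT*(α) then π_i^{S*}(T) ∈ SIT*(α) ∪ {0} for every 1 ≤ i ≤ n−1, so SIT*(α) is closed under the dual immaculate 0-Hecke operators. (b) For every T ∈ SIT*(α) there exist indices i_1,…,i_r (possibly r = 0) such that successively applying π_{i_1}^{S*},…,π_{i_r}^{S*} to S^{row*}_α yields T, with every intermediate result lying in SIT*(α). -/
open Classical

namespace ImmHecke

/-- A filling assigns a natural-number entry to each cell `(row, column)` (0-indexed);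
row `0` is the bottom row.  Cells outside the diagram carry the junk value `0`. -/
abbrev Filling : Type := ℕ × ℕ → ℕ

/-- `c` is a cell of the diagram of the composition `α` (0-indexed rows and columns;
row `i` has `α_i` cells). -/
def IsCell (α : List ℕ) (c : ℕ × ℕ) : Prop :=
  c.1 < α.length ∧ c.2 < α.getD c.1 0

/-- `α` is a composition of `n`: a list of positive integers summing to `n`. -/
def IsComposition (α : List ℕ) (n : ℕ) : Prop :=
  (∀ a ∈ α, 0 < a) ∧ α.sum = n

/-- `T` is a bijective filling of the diagram of `α` with the entries `1, …, n`
(where `n = α.sum`), and with value `0` off the diagram. -/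
def IsStdFilling (α : List ℕ) (T : Filling) : Prop :=
  (∀ c, ¬ IsCell α c → T c = 0) ∧
  (∀ c, IsCell α c → 1 ≤ T c ∧ T c ≤ α.sum) ∧
  (∀ c c', IsCell α c → IsCell α c' → T c = T c' → c = c') ∧
  (∀ m, 1 ≤ m → m ≤ α.sum → ∃ c, IsCell α c ∧ T c = m)

/-- A standard immaculate tableau of shape `α`: a bijective standard filling whose
first-column entries strictly increase bottom to top and whose rows strictly
increase left to right. -/
def IsSIT (α : List ℕ) (T : Filling) : Prop :=
  IsStdFilling α T ∧
  (∀ i i' : ℕ, IsCell α (i, 0) → IsCell α (i', 0) → i < i' → T (i, 0) < T (i', 0)) ∧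
  (∀ i j j' : ℕ, IsCell α (i, j) → IsCell α (i, j') → j < j' → T (i, j) < T (i, j'))

/-- A standard extended tableau of shape `α`: a bijective standard filling whose rows
strictly increase left to right and all of whose columns strictly increase
bottom to top.  Note `SET(α) ⊆ SIT(α)`. -/
def IsSET (α : List ℕ) (T : Filling) : Prop :=
  IsStdFilling α T ∧
  (∀ i j j' : ℕ, IsCell α (i, j) → IsCell α (i, j') → j < j' → T (i, j) < T (i, j')) ∧
  (∀ i i' j : ℕ, IsCell α (i, j) → IsCell α (i', j) → i < i' → T (i, j) < T (i', j))

/-- `SIT*(α)`: standard immaculate tableaux whose first column contains exactly the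
entries `1, 2, …, ℓ(α)`. -/
def IsSITstar (α : List ℕ) (T : Filling) : Prop :=
  IsSIT α T ∧
  (∀ i, IsCell α (i, 0) → 1 ≤ T (i, 0) ∧ T (i, 0) ≤ α.length) ∧
  (∀ m, 1 ≤ m → m ≤ α.length → ∃ i, IsCell α (i, 0) ∧ T (i, 0) = m)

/-- In `T`, the entry `m+1` lies in a row strictly above the row of `m`. -/
def SuccAbove (α : List ℕ) (T : Filling) (m : ℕ) : Prop :=
  ∃ c c', IsCell α c ∧ IsCell α c' ∧ T c = m ∧ T c' = m + 1 ∧ c.1 < c'.1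

/-- In `T`, the entries `m` and `m+1` lie in the same row. -/
def SuccSameRow (α : List ℕ) (T : Filling) (m : ℕ) : Prop :=
  ∃ c c', IsCell α c ∧ IsCell α c' ∧ T c = m ∧ T c' = m + 1 ∧ c.1 = c'.1

/-- In `T`, the entry `m+1` lies in a row strictly below the row of `m`. -/
def SuccBelow (α : List ℕ) (T : Filling) (m : ℕ) : Prop :=
  ∃ c c', IsCell α c ∧ IsCell α c' ∧ T c = m ∧ T c' = m + 1 ∧ c'.1 < c.1

/-- In `T`, the entries `m` and `m+1` are both in the first column. -/
def BothFirstColumn (α : List ℕ) (T : Filling) (m : ℕ) : Prop :=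
  ∃ c c', IsCell α c ∧ IsCell α c' ∧ T c = m ∧ T c' = m + 1 ∧ c.2 = 0 ∧ c'.2 = 0

/-- `s_i(T)`: exchange the entries `i` and `i+1` of `T`. -/
def swapEntries (i : ℕ) (T : Filling) : Filling :=
  fun c => if T c = i then i + 1 else if T c = i + 1 then i else T c

/-- The row-strict dual immaculate 0-Hecke operator `π_i^{RS*}` on `SIT(α) ∪ {0}`
(`0` is encoded as `none`): `π_i(T) = T` if `i+1` is strictly above `i`;
`π_i(T) = 0` if `i` and `i+1` are in the same row; `π_i(T) = s_i(T)` if `i+1` is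
strictly below `i`. -/
noncomputable def piRS (α : List ℕ) (i : ℕ) : Option Filling → Option Filling
  | none => none
  | some T =>
    if SuccAbove α T i then some T
    else if SuccSameRow α T i then none
    else some (swapEntries i T)

/-- The dual immaculate 0-Hecke operator `π_i^{S*}` on `SIT(α) ∪ {0}`:
`π_i(T) = T` if `i+1` is in a row weakly below `i`; `π_i(T) = 0` if `i` and `i+1`
are both in the first column; `π_i(T) = s_i(T)` if `i+1` is strictly above `i`
and `i, i+1` are not both in the first column. -/
noncomputable def piS (α : List ℕ) (i : ℕ) : Option Filling → Option Filling
  | none => none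
  | some T =>
    if SuccSameRow α T i ∨ SuccBelow α T i then some T
    else if BothFirstColumn α T i then none
    else some (swapEntries i T)

/-- The 0-Hecke operator `π_i^{A*}` on `SIT(α)`: `π_i(T) = T` if `i+1` is strictly
above `i` or in the same row as `i`; `π_i(T) = s_i(T)` if `i+1` is strictly below `i`. -/
noncomputable def piA (α : List ℕ) (i : ℕ) (T : Filling) : Filling :=
  if SuccBelow α T i then swapEntries i T else T

/-- The 0-Hecke operator `π_i^{Ā*}` on `SIT(α) ∪ {0}`: `π_i(T) = T` if `i+1` is
strictly below `i`; `π_i(T) = 0` if `i` and `i+1` are in the same row or both in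
the first column; `π_i(T) = s_i(T)` if `i+1` is strictly above `i` and `i, i+1`
are not both in the first column. -/
noncomputable def piAbar (α : List ℕ) (i : ℕ) : Option Filling → Option Filling
  | none => none
  | some T =>
    if SuccBelow α T i then some T
    else if SuccSameRow α T i ∨ BothFirstColumn α T i then none
    else some (swapEntries i T)

/-- `x` belongs to `SIT(α) ∪ {0}` (with `0 = none`). -/
def InSITZ (α : List ℕ) (x : Option Filling) : Prop :=
  ∀ T, x = some T → IsSIT α T

/-- Successively apply the operators `π_{i_1}^{RS*}, …, π_{i_r}^{RS*}` (the list `l = [i_1, …, i_r]`). -/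
noncomputable def applySeqRS (α : List ℕ) (l : List ℕ) (x : Option Filling) : Option Filling :=
  l.foldl (fun y i => piRS α i y) x

/-- Successively apply the operators `π_{i_1}^{S*}, …, π_{i_r}^{S*}`. -/
noncomputable def applySeqS (α : List ℕ) (l : List ℕ) (x : Option Filling) : Option Filling :=
  l.foldl (fun y i => piS α i y) x

/-- The relation `T₁ ≼ T₂` on `SIT(α)`: some sequence of operators `π_i^{RS*}`
(indices in `{1, …, n-1}`, possibly empty) sends `T₁` to `T₂`. -/
def preRS (α : List ℕ) (T₁ T₂ : Filling) : Prop :=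
  ∃ l : List ℕ, (∀ i ∈ l, 1 ≤ i ∧ i ≤ α.sum - 1) ∧ applySeqRS α l (some T₁) = some T₂

/-- The one-line notation of `σ(T)`: read the entries of `T` from right to left in
each row, rows from top to bottom. -/
def readingWord (α : List ℕ) (T : Filling) : List ℕ :=
  ((List.range α.length).reverse).flatMap
    (fun i => ((List.range (α.getD i 0)).map fun j => T (i, j)).reverse)

/-- The number of inversions of a word `w`: pairs of positions `p < q` with `w p > w q`. -/
def inversions (w : List ℕ) : ℕ :=
  ((Finset.range w.length ×ˢ Finset.range w.length).filter
    (fun pq : ℕ × ℕ => pq.1 < pq.2 ∧ w.getD pq.2 0 < w.getD pq.1 0)).card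

/-- `S⁰_α`: first column contains `1, …, ℓ` bottom to top; the remaining cells are
filled with `ℓ+1, …, n` consecutively, reading rows from top to bottom and left to
right within each row. -/
noncomputable def S0 (α : List ℕ) : Filling := fun c =>
  if IsCell α c then
    if c.2 = 0 then c.1 + 1
    else
      α.length + (((List.range α.length).filter fun r => c.1 < r).map fun r => α.getD r 0 - 1).sum + c.2
  else 0

/-- `S^{row}_α`: the row superstandard tableau, entries `1, …, n` placed consecutively
reading rows bottom to top, left to right within each row. -/
noncomputable def Srow (α : List ℕ) : Filling := fun c =>
  if IsCell α c then (α.take c.1).sum + c.2 + 1 else 0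

/-- `S^{row*}_α`: first column contains `1, …, ℓ` bottom to top; the remaining cells
are filled with `ℓ+1, …, n` consecutively, reading rows bottom to top, left to right
within each row. -/
noncomputable def SrowStar (α : List ℕ) : Filling := fun c =>
  if IsCell α c then
    if c.2 = 0 then c.1 + 1
    else α.length + ((List.range c.1).map fun r => α.getD r 0 - 1).sum + c.2
  else 0

/-- `S^{col}_α`: the column superstandard tableau, entries `1, …, n` placed
consecutively reading columns bottom to top, columns left to right. -/
noncomputable def Scol (α : List ℕ) : Filling := fun c =>
  if IsCell α c then
    ((List.range c.2).map fun j' =>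
        ((List.range α.length).filter fun r => j' < α.getD r 0).length).sum
      + ((List.range c.1).filter fun r => c.2 < α.getD r 0).length + 1
  else 0

/-- The image of a basis element of `V_α` under the linearly extended operator
`π_i^{RS*}` (the value `0` of the operator is interpreted as the zero vector). -/
noncomputable def piTargetRS (α : List ℕ) (i : ℕ) (T : {T : Filling // IsSIT α T}) :
    ({T : Filling // IsSIT α T} →₀ ℚ) :=
  match piRS α i (some T.val) with
  | none => 0
  | some T' => if h : IsSIT α T' then Finsupp.single ⟨T', h⟩ 1 else 0

/-- The operator `π_i^{RS*}` extended to a `ℚ`-linear endomorphism of the free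
`ℚ`-vector space `V_α` with basis `SIT(α)`. -/
noncomputable def piRSLin (α : List ℕ) (i : ℕ) :
    ({T : Filling // IsSIT α T} →₀ ℚ) →ₗ[ℚ] ({T : Filling // IsSIT α T} →₀ ℚ) :=
  Finsupp.lsum ℚ fun T => LinearMap.toSpanSingleton ℚ _ (piTargetRS α i T)

/-- The image of a basis element of `Z_α` under the linearly extended operator
`π_i^{RS*}`. -/
noncomputable def piTargetSET (α : List ℕ) (i : ℕ) (T : {T : Filling // IsSET α T}) :
    ({T : Filling // IsSET α T} →₀ ℚ) :=
  match piRS α i (some T.val) with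
  | none => 0
  | some T' => if h : IsSET α T' then Finsupp.single ⟨T', h⟩ 1 else 0

/-- The operator `π_i^{RS*}` extended to a `ℚ`-linear endomorphism of the free
`ℚ`-vector space `Z_α` with basis `SET(α)`. -/
noncomputable def piRSLinSET (α : List ℕ) (i : ℕ) :
    ({T : Filling // IsSET α T} →₀ ℚ) →ₗ[ℚ] ({T : Filling // IsSET α T} →₀ ℚ) :=
  Finsupp.lsum ℚ fun T => LinearMap.toSpanSingleton ℚ _ (piTargetSET α i T)

section Aux

variable {α : List ℕ} {T : Filling}

lemma swap_invol (i : ℕ) (T : Filling) : swapEntries i (swapEntries i T) = T := by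
  funext c
  simp only [swapEntries]
  split_ifs <;> omega

lemma getD_pos (hpos : ∀ a ∈ α, 0 < a) {r : ℕ} (hr : r < α.length) : 0 < α.getD r 0 := by
  rw [List.getD_eq_getElem α 0 hr]
  exact hpos _ (List.getElem_mem hr)

lemma cell0 (hpos : ∀ a ∈ α, 0 < a) {r : ℕ} (hr : r < α.length) : IsCell α (r, 0) :=
  ⟨hr, getD_pos hpos hr⟩

lemma getD_le_sum : ∀ (α : List ℕ) (r : ℕ), α.getD r 0 ≤ α.sum := by
  intro α
  induction α with
  | nil => intro r; simp [List.getD]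
  | cons a tl ih =>
    intro r
    cases r with
    | zero => simp
    | succ r => have := ih r; simp only [List.getD_cons_succ, List.sum_cons]; omega

/-- first column of a `SIT*` tableau is pinned: `T (r,0) = r+1`. -/
lemma firstCol_val (hpos : ∀ a ∈ α, 0 < a) (hT : IsSITstar α T) :
    ∀ r, r < α.length → T (r, 0) = r + 1 := by
  have chain : ∀ r s, r ≤ s → s < α.length → T (r,0) + s ≤ T (s,0) + r := by
    intro r s hrs
    induction s, hrs using Nat.le_induction with
    | base => intro _; omega
    | succ s hs ih =>
      intro hlt
      have h1 := ih (by omega)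
      have h2 := hT.1.2.1 s (s+1) (cell0 hpos (by omega)) (cell0 hpos hlt) (by omega)
      omega
  intro r hr
  have h0 : 1 ≤ T (0,0) := (hT.1.1.2.1 _ (cell0 hpos (by omega))).1
  have hlow := chain 0 r (by omega) hr
  have hhigh := chain r (α.length - 1) (by omega) (by omega)
  have htop : T (α.length - 1, 0) ≤ α.length := (hT.2.1 _ (cell0 hpos (by omega))).2
  omega

lemma small_in_firstCol (hT : IsSITstar α T) {c : ℕ × ℕ} (hc : IsCell α c)
    (h1 : 1 ≤ T c) (h2 : T c ≤ α.length) : c.2 = 0 := by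
  obtain ⟨r, hr, hv⟩ := hT.2.2 (T c) h1 h2
  have := hT.1.1.2.2.1 c (r,0) hc hr hv.symm
  rw [this]

/-- Key lemma: swapping `i, i+1` (both `> ℓ`, in distinct rows) preserves `SIT*`. -/
lemma swap_mem_SITstar (hT : IsSITstar α T) {c c' : ℕ × ℕ} {i : ℕ}
    (hc : IsCell α c) (hc' : IsCell α c') (hvc : T c = i) (hvc' : T c' = i+1)
    (hrow : c.1 ≠ c'.1) (hi : α.length < i) :
    IsSITstar α (swapEntries i T) := by
  obtain ⟨⟨⟨hzero, hbd, hinj, hsurj⟩, hcol, hrowm⟩, hcb, hcs⟩ := hT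
  have hbc := hbd c hc
  have hbc' := hbd c' hc'
  have hvalinj : ∀ x y : ℕ × ℕ, swapEntries i T x = swapEntries i T y → T x = T y := by
    intro x y h
    simp only [swapEntries] at h
    split_ifs at h <;> omega
  refine ⟨⟨⟨?_, ?_, ?_, ?_⟩, ?_, ?_⟩, ?_, ?_⟩
  · intro x hx
    have := hzero x hx
    simp only [swapEntries]
    split_ifs <;> omega
  · intro x hx
    have := hbd x hx
    simp only [swapEntries]
    split_ifs <;> omega
  · intro x y hx hy h
    exact hinj x y hx hy (hvalinj x y h)
  · intro m h1 h2
    by_cases hm1 : m = i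
    · refine ⟨c', hc', ?_⟩; simp only [swapEntries]; split_ifs <;> omega
    by_cases hm2 : m = i + 1
    · refine ⟨c, hc, ?_⟩; simp only [swapEntries]; split_ifs <;> omega
    obtain ⟨x, hx, hvx⟩ := hsurj m h1 h2
    refine ⟨x, hx, ?_⟩; simp only [swapEntries]; split_ifs <;> omega
  · intro r r' h h' hlt
    have := hcol r r' h h' hlt
    have b1 := hcb r h
    have b2 := hcb r' h'
    simp only [swapEntries]
    split_ifs <;> omega
  · intro r j j' h h' hlt
    have hab := hrowm r j j' h h' hlt
    have hx : ¬(T (r,j) = i ∧ T (r,j') = i+1) := by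
      rintro ⟨e1, e2⟩
      have e3 : (r,j) = c := hinj _ _ h hc (e1.trans hvc.symm)
      have e4 : (r,j') = c' := hinj _ _ h' hc' (e2.trans hvc'.symm)
      apply hrow
      rw [← e3, ← e4]
    simp only [swapEntries]
    split_ifs <;> omega
  · intro r h
    have := hcb r h
    simp only [swapEntries]
    split_ifs <;> omega
  · intro m h1 h2
    obtain ⟨r, hr, hv⟩ := hcs m h1 h2
    refine ⟨r, hr, ?_⟩
    simp only [swapEntries]
    split_ifs <;> omega

/-- Inverse step: if `i+1` lies strictly below `i` (both `> ℓ`) in `T ∈ SIT*`, then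
`T'' = s_i T ∈ SIT*` and `π_i^{S*}(T'') = T`. -/
lemma piS_swap (hT : IsSITstar α T) {c c' : ℕ × ℕ} {i : ℕ}
    (hc : IsCell α c) (hc' : IsCell α c') (hvc : T c = i) (hvc' : T c' = i+1)
    (hrow : c'.1 < c.1) (hi : α.length < i) :
    IsSITstar α (swapEntries i T) ∧ piS α i (some (swapEntries i T)) = some T := by
  have hS := swap_mem_SITstar hT hc hc' hvc hvc' (by omega) hi
  refine ⟨hS, ?_⟩
  have hSc : swapEntries i T c = i + 1 := by
    simp only [swapEntries]; split_ifs <;> omega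
  have hSc' : swapEntries i T c' = i := by
    simp only [swapEntries]; split_ifs <;> omega
  have huniq : ∀ d d' : ℕ × ℕ, IsCell α d → IsCell α d' →
      swapEntries i T d = i → swapEntries i T d' = i + 1 → d = c' ∧ d' = c := by
    intro d d' hd hd' e1 e2
    exact ⟨hS.1.1.2.2.1 d c' hd hc' (e1.trans hSc'.symm),
           hS.1.1.2.2.1 d' c hd' hc (e2.trans hSc.symm)⟩
  have h1 : ¬ (SuccSameRow α (swapEntries i T) i ∨ SuccBelow α (swapEntries i T) i) := by
    rintro (⟨d, d', hd, hd', e1, e2, e3⟩ | ⟨d, d', hd, hd', e1, e2, e3⟩) <;>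
    · obtain ⟨u1, u2⟩ := huniq d d' hd hd' e1 e2
      rw [u1, u2] at e3; omega
  have h2 : ¬ BothFirstColumn α (swapEntries i T) i := by
    rintro ⟨d, d', hd, hd', e1, e2, e3, e4⟩
    obtain ⟨u1, u2⟩ := huniq d d' hd hd' e1 e2
    rw [u1] at e3
    have hcc : c' = (c'.1, 0) := by
      rw [← e3]
    have := (hT.2.1 c'.1 (by rw [← hcc]; exact hc')).2
    rw [← hcc, hvc'] at this
    omega
  simp only [piS, if_neg h1, if_neg h2, swap_invol]

/-- partial sums `B α r = Σ_{r' < r} (α_{r'} - 1)` -/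
def B (α : List ℕ) (r : ℕ) : ℕ := ((List.range r).map fun r' => α.getD r' 0 - 1).sum

lemma B_zero : B α 0 = 0 := rfl

lemma B_succ (α : List ℕ) (r : ℕ) : B α (r+1) = B α r + (α.getD r 0 - 1) := by
  simp [B, List.range_succ]

lemma B_mono (α : List ℕ) : ∀ {r s : ℕ}, r ≤ s → B α r ≤ B α s := by
  intro r s h
  induction s, h using Nat.le_induction with
  | base => exact le_refl _
  | succ s hs ih => rw [B_succ]; omega

lemma B_cons (a : ℕ) (tl : List ℕ) : ∀ r, B (a :: tl) (r+1) = (a - 1) + B tl r := by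
  intro r
  induction r with
  | zero => simp [B, List.range_succ]
  | succ r ih =>
    rw [B_succ, ih, B_succ]
    simp only [List.getD_cons_succ]
    omega

lemma sum_eq_len_add_B : ∀ (α : List ℕ), (∀ a ∈ α, 0 < a) → α.sum = α.length + B α α.length := by
  intro α
  induction α with
  | nil => intro _; simp [B]
  | cons a tl ih =>
    intro hpos
    have ha : 0 < a := hpos a (by simp)
    have := ih (fun x hx => hpos x (by simp [hx]))
    simp only [List.sum_cons, List.length_cons, B_cons]
    omega

lemma B_find (α : List ℕ) : ∀ (k t : ℕ), t < B α k → ∃ r, r < k ∧ B α r ≤ t ∧ t < B α (r+1) := by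
  intro k
  induction k with
  | zero => intro t ht; simp [B_zero] at ht
  | succ k ih =>
    intro t ht
    by_cases h : t < B α k
    · obtain ⟨r, h1, h2, h3⟩ := ih t h
      exact ⟨r, by omega, h2, h3⟩
    · exact ⟨k, by omega, by omega, ht⟩

lemma SrowStar_val0 {r : ℕ} (hc : IsCell α (r, 0)) : SrowStar α (r, 0) = r + 1 := by
  simp [SrowStar, hc]

lemma SrowStar_val {r j : ℕ} (hc : IsCell α (r, j)) (hj : j ≠ 0) :
    SrowStar α (r, j) = α.length + B α r + j := by
  simp only [SrowStar, B]
  rw [if_pos hc, if_neg hj]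

lemma SrowStar_mem (hpos : ∀ a ∈ α, 0 < a) : IsSITstar α (SrowStar α) := by
  have hsum := sum_eq_len_add_B α hpos
  have hcellj : ∀ r j, IsCell α (r, j) → j + 1 ≤ α.getD r 0 := fun r j hc => hc.2
  refine ⟨⟨⟨?_, ?_, ?_, ?_⟩, ?_, ?_⟩, ?_, ?_⟩
  · intro c hc; simp [SrowStar, hc]
  · rintro ⟨r, j⟩ hc
    have hr : r < α.length := hc.1
    by_cases hj : j = 0
    · subst hj; rw [SrowStar_val0 hc]
      have := B_mono α (show r + 1 ≤ α.length by omega)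
      omega
    · rw [SrowStar_val hc hj]
      have h1 := hcellj r j hc
      have h2 := B_succ α r
      have h3 := B_mono α (show r + 1 ≤ α.length by omega)
      omega
  · rintro ⟨r, j⟩ ⟨r', j'⟩ hc hc' heq
    have hr : r < α.length := hc.1
    have hr' : r' < α.length := hc'.1
    by_cases hj : j = 0 <;> by_cases hj' : j' = 0
    · subst hj; subst hj'
      rw [SrowStar_val0 hc, SrowStar_val0 hc'] at heq
      simp only [Prod.mk.injEq]
      exact ⟨by omega, trivial⟩
    · subst hj
      rw [SrowStar_val0 hc, SrowStar_val hc' hj'] at heq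
      exfalso; omega
    · subst hj'
      rw [SrowStar_val hc hj, SrowStar_val0 hc'] at heq
      exfalso; omega
    · rw [SrowStar_val hc hj, SrowStar_val hc' hj'] at heq
      have h1 := hcellj r j hc
      have h1' := hcellj r' j' hc'
      have hrr : r = r' := by
        rcases Nat.lt_trichotomy r r' with h | h | h
        · have e1 := B_succ α r
          have e2 := B_mono α (show r + 1 ≤ r' by omega)
          omega
        · exact h
        · have e1 := B_succ α r'
          have e2 := B_mono α (show r' + 1 ≤ r by omega)
          omega
      subst hrr
      simp only [Prod.mk.injEq]
      exact ⟨trivial, by omega⟩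
  · intro m h1 h2
    by_cases hm : m ≤ α.length
    · have hc : IsCell α (m - 1, 0) := cell0 hpos (by omega)
      exact ⟨(m-1, 0), hc, by rw [SrowStar_val0 hc]; omega⟩
    · push_neg at hm
      obtain ⟨r, hrk, hub, hlb⟩ := B_find α α.length (m - α.length - 1) (by omega)
      rw [B_succ] at hlb
      have hg := getD_pos hpos hrk
      have hc : IsCell α (r, m - α.length - B α r) :=
        ⟨hrk, show m - α.length - B α r < α.getD r 0 by omega⟩
      refine ⟨(r, m - α.length - B α r), hc, ?_⟩
      rw [SrowStar_val hc (by omega)]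
      omega
  · intro r r' h h' hlt
    rw [SrowStar_val0 h, SrowStar_val0 h']
    omega
  · intro r j j' h h' hlt
    by_cases hj : j = 0
    · subst hj
      rw [SrowStar_val0 h, SrowStar_val h' (by omega)]
      have : r < α.length := h.1
      omega
    · rw [SrowStar_val h hj, SrowStar_val h' (by omega)]
      omega
  · intro r h
    rw [SrowStar_val0 h]
    have : r < α.length := h.1
    omega
  · intro m h1 h2
    have hc : IsCell α (m - 1, 0) := cell0 hpos (by omega)
    exact ⟨m - 1, hc, by rw [SrowStar_val0 hc]; omega⟩

end Aux
section Aux2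

variable {α : List ℕ} {T : Filling}

/-- If no entry `m > ℓ` has `m+1` strictly below it, then `T = S^{row*}`. -/
lemma noDescent_eq_SrowStar (hpos : ∀ a ∈ α, 0 < a) (hT : IsSITstar α T)
    (hnd : ∀ m d d', α.length < m → IsCell α d → IsCell α d' → T d = m → T d' = m + 1 →
      d.1 ≤ d'.1) :
    T = SrowStar α := by
  have hS := SrowStar_mem hpos
  obtain ⟨⟨⟨hzero, hbd, hinj, hsurj⟩, hcol, hrowm⟩, hcb, hcs⟩ := hT
  have hT' : IsSITstar α T := ⟨⟨⟨hzero, hbd, hinj, hsurj⟩, hcol, hrowm⟩, hcb, hcs⟩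
  -- rows of entries `> ℓ` weakly increase along values
  have rowchain : ∀ a, α.length < a → ∀ b, a ≤ b → b ≤ α.sum →
      ∀ x y : ℕ × ℕ, IsCell α x → IsCell α y → T x = a → T y = b → x.1 ≤ y.1 := by
    intro a ha b hb
    induction b, hb using Nat.le_induction with
    | base =>
      intro _ x y hx hy hvx hvy
      have : x = y := hinj x y hx hy (hvx.trans hvy.symm)
      rw [this]
    | succ b hb ih =>
      intro hbs x y hx hy hvx hvy
      obtain ⟨z, hz, hvz⟩ := hsurj b (by omega) (by omega)
      have h1 := ih (by omega) x z hx hz hvx hvz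
      have h2 := hnd b z y (by omega) hz hy hvz hvy
      omega
  -- the `T`-cell of `m` coincides with the `SrowStar`-cell of `m` for `m > ℓ`
  have key : ∀ m, α.length < m → m ≤ α.sum → ∀ d e : ℕ × ℕ, IsCell α d → IsCell α e →
      T d = m → SrowStar α e = m → d = e := by
    intro m
    induction m using Nat.strong_induction_on with
    | _ m ih =>
      intro hm hms d e hd he hvd hve
      have hearlier : ∀ x : ℕ × ℕ, IsCell α x → x.2 ≠ 0 → SrowStar α x < m →
          T x = SrowStar α x := by
        intro x hx hx2 hlt
        have hb := hS.1.1.2.1 x hx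
        have hgt : α.length < SrowStar α x := by
          obtain ⟨xr, xj⟩ := x
          rw [SrowStar_val hx hx2]
          have : xj ≠ 0 := hx2
          omega
        obtain ⟨d₀, hd₀, hvd₀⟩ := hsurj (SrowStar α x) (by omega) hb.2
        have heq := ih _ hlt hgt hb.2 d₀ x hd₀ hx hvd₀ rfl
        exact heq ▸ hvd₀
      obtain ⟨dr, dj⟩ := d
      obtain ⟨er, ej⟩ := e
      -- both cells are off the first column
      have hej : ej ≠ 0 := by
        intro h
        subst h
        have := (hS.2.1 er he).2
        omega
      have hdj : dj ≠ 0 := by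
        intro h
        subst h
        have := (hcb dr hd).2
        omega
      have hveq : α.length + B α er + ej = m := by rw [← SrowStar_val he hej, hve]
      -- step 2 : er ≤ dr
      have h2 : er ≤ dr := by
        by_contra hcon
        push_neg at hcon
        have hSd : SrowStar α (dr, dj) = α.length + B α dr + dj := SrowStar_val hd hdj
        have e1 := B_succ α dr
        have e2 := B_mono α (show dr + 1 ≤ er by omega)
        have e3 : dj < α.getD dr 0 := hd.2
        have hlt : SrowStar α (dr, dj) < m := by
          rw [hSd]; omega
        have := hearlier (dr, dj) hd hdj hlt
        rw [hSd] at this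
        omega
      -- step 3 : w := T e satisfies w ≥ m
      have hbw := hbd (er, ej) he
      have hwgt : α.length < T (er, ej) := by
        by_contra hcon
        push_neg at hcon
        have := small_in_firstCol hT' he hbw.1 hcon
        exact hej this
      have hwm : m ≤ T (er, ej) := by
        by_contra hcon
        push_neg at hcon
        obtain ⟨e₂, he₂, hve₂⟩ := hS.1.1.2.2.2 (T (er, ej)) (by omega) hbw.2
        have := ih _ hcon hwgt hbw.2 (er, ej) e₂ he he₂ rfl hve₂
        rw [← this] at hve₂
        omega
      by_cases hw : T (er, ej) = m
      · exact hinj _ _ hd he (hvd.trans hw.symm)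
      · exfalso
        -- w > m ; rows give dr = er, then columns give a contradiction
        have h5 : dr ≤ er := rowchain m hm (T (er, ej)) (by omega) hbw.2 (dr, dj) (er, ej)
          hd he hvd rfl
        have hre : dr = er := by omega
        subst hre
        rcases Nat.lt_trichotomy dj ej with hc3 | hc3 | hc3
        · have hSd : SrowStar α (dr, dj) = α.length + B α dr + dj := SrowStar_val hd hdj
          have hlt : SrowStar α (dr, dj) < m := by rw [hSd]; omega
          have := hearlier (dr, dj) hd hdj hlt
          rw [hSd] at this
          omega
        · subst hc3
          have : (dr, dj) = (dr, dj) → False := fun _ => hw (by rw [← hvd])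
          exact this rfl
        · have := hrowm dr ej dj he hd hc3
          omega
  -- conclude
  funext c
  by_cases hc : IsCell α c
  · obtain ⟨r, j⟩ := c
    by_cases hj : j = 0
    · subst hj
      rw [firstCol_val hpos hT' r hc.1, SrowStar_val0 hc]
    · have hb := hbd (r, j) hc
      have hgt : α.length < T (r, j) := by
        by_contra hcon
        push_neg at hcon
        exact hj (small_in_firstCol hT' hc hb.1 hcon)
      obtain ⟨e, he, hve⟩ := hS.1.1.2.2.2 (T (r, j)) (by omega) hb.2
      have := key (T (r, j)) hgt hb.2 (r, j) e hc he rfl hve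
      rw [this] at hve ⊢
      exact hve.symm
  · rw [hzero c hc, (hS.1.1.1 c hc)]

/-- weight statistic used for the induction in part (b) -/
noncomputable def Mstat (α : List ℕ) (T : Filling) : ℕ :=
  ∑ c ∈ (Finset.range α.length ×ˢ Finset.range (α.sum + 1)).filter (fun c => IsCell α c),
    T c * (α.length - 1 - c.1)

lemma mem_cellFinset {c : ℕ × ℕ} (hc : IsCell α c) :
    c ∈ (Finset.range α.length ×ˢ Finset.range (α.sum + 1)).filter (fun c => IsCell α c) := by
  rw [Finset.mem_filter, Finset.mem_product, Finset.mem_range, Finset.mem_range]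
  have h1 := hc.1
  have h2 := hc.2
  have h3 := getD_le_sum α c.1
  exact ⟨⟨h1, by omega⟩, hc⟩

lemma Mstat_swap_lt (hT : IsSITstar α T) {c c' : ℕ × ℕ} {i : ℕ}
    (hc : IsCell α c) (hc' : IsCell α c') (hvc : T c = i) (hvc' : T c' = i+1)
    (hrow : c'.1 < c.1) (hi : α.length < i) :
    Mstat α (swapEntries i T) < Mstat α T := by
  classical
  set s := (Finset.range α.length ×ˢ Finset.range (α.sum + 1)).filter (fun c => IsCell α c)
    with hs
  have hcs : c ∈ s := mem_cellFinset hc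
  have hne : c' ≠ c := by
    intro h; rw [h] at hrow; omega
  have hcs' : c' ∈ (s.erase c) := Finset.mem_erase.2 ⟨hne, mem_cellFinset hc'⟩
  have hsplit : ∀ U : Filling, ∑ x ∈ s, U x * (α.length - 1 - x.1) =
      U c * (α.length - 1 - c.1) + (U c' * (α.length - 1 - c'.1) +
        ∑ x ∈ (s.erase c).erase c', U x * (α.length - 1 - x.1)) := by
    intro U
    rw [← Finset.add_sum_erase _ _ hcs, ← Finset.add_sum_erase _ _ hcs']
  have htail : ∑ x ∈ (s.erase c).erase c', swapEntries i T x * (α.length - 1 - x.1) =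
      ∑ x ∈ (s.erase c).erase c', T x * (α.length - 1 - x.1) := by
    apply Finset.sum_congr rfl
    intro x hx
    have hx1 : x ≠ c' := (Finset.mem_erase.1 hx).1
    have hx2 : x ≠ c := (Finset.mem_erase.1 ((Finset.mem_erase.1 hx).2)).1
    have hxc : IsCell α x := (Finset.mem_filter.1 (Finset.mem_erase.1
      ((Finset.mem_erase.1 hx).2)).2).2
    have e1 : T x ≠ i := by
      intro h
      exact hx2 (hT.1.1.2.2.1 x c hxc hc (h.trans hvc.symm))
    have e2 : T x ≠ i + 1 := by
      intro h
      exact hx1 (hT.1.1.2.2.1 x c' hxc hc' (h.trans hvc'.symm))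
    simp only [swapEntries, if_neg e1, if_neg e2]
  have hSc : swapEntries i T c = i + 1 := by
    simp only [swapEntries]; split_ifs <;> omega
  have hSc' : swapEntries i T c' = i := by
    simp only [swapEntries]; split_ifs <;> omega
  have hwlt : α.length - 1 - c.1 < α.length - 1 - c'.1 := by
    have h1 := hc.1
    omega
  unfold Mstat
  rw [← hs, hsplit (swapEntries i T), hsplit T, htail, hSc, hSc', hvc, hvc']
  have harith : ∀ u v : ℕ, u < v → (i+1) * u + (i * v) < i * u + ((i+1) * v) := by
    intro u v huv
    simp only [add_mul, one_mul]
    omega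
  have := harith _ _ hwlt
  omega

lemma gen_aux (hpos : ∀ a ∈ α, 0 < a) :
    ∀ k (T : Filling), Mstat α T < k → IsSITstar α T →
      ∃ l : List ℕ, (∀ i ∈ l, 1 ≤ i ∧ i ≤ α.sum - 1) ∧
        applySeqS α l (some (SrowStar α)) = some T ∧
        (∀ k', k' ≤ l.length → ∃ T', applySeqS α (l.take k') (some (SrowStar α)) = some T' ∧
          IsSITstar α T') := by
  intro k
  induction k with
  | zero => intro T h; omega
  | succ k ih =>
    intro T hM hT
    by_cases heq : T = SrowStar α
    · refine ⟨[], by simp, by simp [applySeqS, heq], ?_⟩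
      intro k' hk'
      simp only [List.length_nil, Nat.le_zero] at hk'
      subst hk'
      exact ⟨SrowStar α, by simp [applySeqS], heq ▸ hT⟩
    · have hnd : ¬ (∀ m d d', α.length < m → IsCell α d → IsCell α d' → T d = m →
          T d' = m + 1 → d.1 ≤ d'.1) := fun h => heq (noDescent_eq_SrowStar hpos hT h)
      push_neg at hnd
      obtain ⟨m, d, d', hm, hd, hd', hvd, hvd', hrow⟩ := hnd
      obtain ⟨hT'', hpi⟩ := piS_swap hT hd hd' hvd hvd' hrow hm
      have hMlt : Mstat α (swapEntries m T) < Mstat α T :=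
        Mstat_swap_lt hT hd hd' hvd hvd' hrow hm
      obtain ⟨l, hl, happ, hpre⟩ := ih (swapEntries m T) (by omega) hT''
      refine ⟨l ++ [m], ?_, ?_, ?_⟩
      · intro x hx
        rcases List.mem_append.1 hx with h | h
        · exact hl x h
        · simp only [List.mem_singleton] at h
          subst h
          have hb := (hT.1.1.2.1 d' hd').2
          rw [hvd'] at hb
          omega
      · show List.foldl (fun y i => piS α i y) (some (SrowStar α)) (l ++ [m]) = some T
        rw [List.foldl_append]
        simp only [List.foldl_cons, List.foldl_nil]
        have : List.foldl (fun y i => piS α i y) (some (SrowStar α)) l =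
            some (swapEntries m T) := happ
        rw [this]
        exact hpi
      · intro k' hk'
        by_cases hk2 : k' ≤ l.length
        · rw [List.take_append_of_le_length hk2]
          exact hpre k' hk2
        · have hlen : k' = l.length + 1 := by
            simp only [List.length_append, List.length_cons, List.length_nil] at hk'
            omega
          subst hlen
          rw [show l.length + 1 = (l ++ [m]).length by simp, List.take_length]
          refine ⟨T, ?_, hT⟩
          show List.foldl (fun y i => piS α i y) (some (SrowStar α)) (l ++ [m]) = some T
          rw [List.foldl_append]
          simp only [List.foldl_cons, List.foldl_nil]
          rw [show List.foldl (fun y i => piS α i y) (some (SrowStar α)) l =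
            some (swapEntries m T) from happ]
          exact hpi

end Aux2
theorem SITstar_closed_and_generated (n : ℕ) (α : List ℕ) (hα : IsComposition α n) :
    (∀ T, IsSITstar α T → ∀ i, 1 ≤ i → i ≤ n - 1 →
      piS α i (some T) = none ∨
        ∃ T', piS α i (some T) = some T' ∧ IsSITstar α T') ∧
    (∀ T, IsSITstar α T → ∃ l : List ℕ, (∀ i ∈ l, 1 ≤ i ∧ i ≤ n - 1) ∧
      applySeqS α l (some (SrowStar α)) = some T ∧
      (∀ k, k ≤ l.length → ∃ T', applySeqS α (l.take k) (some (SrowStar α)) = some T' ∧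
        IsSITstar α T')) := by
  obtain ⟨hpos, hsum⟩ := hα
  constructor
  · intro T hT i hi1 hi2
    by_cases h1 : SuccSameRow α T i ∨ SuccBelow α T i
    · exact Or.inr ⟨T, by simp [piS, h1], hT⟩
    by_cases h2 : BothFirstColumn α T i
    · exact Or.inl (by simp [piS, h1, h2])
    · right
      have hin : i ≤ α.sum := by omega
      have hin' : i + 1 ≤ α.sum := by omega
      obtain ⟨c, hc, hvc⟩ := hT.1.1.2.2.2 i hi1 hin
      obtain ⟨c', hc', hvc'⟩ := hT.1.1.2.2.2 (i+1) (by omega) hin'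
      have hne : c.1 ≠ c'.1 := fun h => h1 (Or.inl ⟨c, c', hc, hc', hvc, hvc', h⟩)
      have hnb : ¬ c'.1 < c.1 := fun h => h1 (Or.inr ⟨c, c', hc, hc', hvc, hvc', h⟩)
      have hlt : c.1 < c'.1 := by omega
      have hgt : α.length < i := by
        by_contra hle
        push_neg at hle
        obtain ⟨r, hr, hv⟩ := hT.2.2 i hi1 hle
        have hcr : c = (r, 0) := hT.1.1.2.2.1 c (r,0) hc hr (hvc.trans hv.symm)
        by_cases hcase : i < α.length
        · obtain ⟨r', hr', hv'⟩ := hT.2.2 (i+1) (by omega) (by omega)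
          have hcr' : c' = (r', 0) := hT.1.1.2.2.1 c' (r',0) hc' hr' (hvc'.trans hv'.symm)
          exact h2 ⟨c, c', hc, hc', hvc, hvc', by rw [hcr], by rw [hcr']⟩
        · have hieq : i = α.length := by omega
          have hc'1 : c'.1 < α.length := hc'.1
          have hcelltop : IsCell α (α.length - 1, 0) := cell0 hpos (by omega)
          have hr1 : r < α.length - 1 := by
            have : c.1 = r := by rw [hcr]
            omega
          have hmono := hT.1.2.1 r (α.length - 1) hr hcelltop hr1
          have hbtop := (hT.2.1 (α.length - 1) hcelltop).2
          omega
      exact ⟨swapEntries i T, by simp [piS, h1, h2],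
        swap_mem_SITstar hT hc hc' hvc hvc' hne hgt⟩
  · intro T hT
    obtain ⟨l, hl, happ, hpre⟩ := gen_aux hpos (Mstat α T + 1) T (by omega) hT
    rw [hsum] at hl
    exact ⟨l, hl, happ, hpre⟩

end ImmHecke
end

section
/- Let α be a composition of n. The operators π_i^{A*} on SIT(α) satisfy the 0-Hecke algebra relations: (π_i^{A*})∘(π_i^{A*}) = π_i^{A*} for all 1 ≤ i ≤ n−1; π_i^{A*}∘π_j^{A*} = π_j^{A*}∘π_i^{A*} whenever |i−j| ≥ 2; and π_i^{A*}∘π_{i+1}^{A*}∘π_i^{A*} = π_{i+1}^{A*}∘π_i^{A*}∘π_{i+1}^{A*} for all 1 ≤ i ≤ n−2. -/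
open Classical

namespace ImmHecke

section Aux

variable {α : List ℕ} {T : Filling}

lemma swapEntries_apply (m : ℕ) (T : Filling) (c : ℕ × ℕ) :
    swapEntries m T c = Equiv.swap m (m + 1) (T c) := by
  simp [swapEntries, Equiv.swap_apply_def]

lemma swapEntries_val_fst {m : ℕ} {c : ℕ × ℕ} (h : T c = m) :
    swapEntries m T c = m + 1 := by
  simp [swapEntries, h]

lemma swapEntries_val_snd {m : ℕ} {c : ℕ × ℕ} (h : T c = m + 1) :
    swapEntries m T c = m := by
  simp only [swapEntries, h]; split_ifs <;> omega

lemma swapEntries_val_other {m v : ℕ} {c : ℕ × ℕ} (h : T c = v) (h1 : v ≠ m)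
    (h2 : v ≠ m + 1) : swapEntries m T c = v := by
  simp only [swapEntries, h]; split_ifs <;> omega

lemma inj_swap (hinj : ∀ c c', IsCell α c → IsCell α c' → T c = T c' → c = c') (m : ℕ) :
    ∀ c c', IsCell α c → IsCell α c' → swapEntries m T c = swapEntries m T c' → c = c' := by
  intro c c' hc hc' h
  apply hinj c c' hc hc'
  rw [swapEntries_apply, swapEntries_apply] at h
  exact (Equiv.swap m (m + 1)).injective h

lemma piA_eq_of {m : ℕ} {c1 c2 : ℕ × ℕ}
    (hinj : ∀ c c', IsCell α c → IsCell α c' → T c = T c' → c = c')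
    (hc1 : IsCell α c1) (hc2 : IsCell α c2) (e1 : T c1 = m) (e2 : T c2 = m + 1) :
    piA α m T = if c2.1 < c1.1 then swapEntries m T else T := by
  unfold piA
  by_cases h : c2.1 < c1.1
  · rw [if_pos h, if_pos ⟨c1, c2, hc1, hc2, e1, e2, h⟩]
  · rw [if_neg h, if_neg]
    rintro ⟨d, d', hd, hd', hv, hv', hlt⟩
    have hd1 : d = c1 := hinj _ _ hd hc1 (by rw [hv, e1])
    have hd2 : d' = c2 := hinj _ _ hd' hc2 (by rw [hv', e2])
    subst hd1; subst hd2; exact h hlt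

lemma succBelow_swap_of_disjoint {i j : ℕ} (h : i + 2 ≤ j ∨ j + 2 ≤ i) :
    SuccBelow α (swapEntries j T) i ↔ SuccBelow α T i := by
  have key : ∀ (c : ℕ × ℕ) (v : ℕ), v ≠ j → v ≠ j + 1 →
      (swapEntries j T c = v ↔ T c = v) := by
    intro c v h1 h2
    rw [swapEntries_apply, Equiv.apply_eq_iff_eq_symm_apply, Equiv.symm_swap,
      Equiv.swap_apply_of_ne_of_ne h1 h2]
  unfold SuccBelow
  constructor
  · rintro ⟨c, c', hc, hc', hv, hv', hlt⟩
    exact ⟨c, c', hc, hc', (key c i (by omega) (by omega)).mp hv,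
      (key c' (i + 1) (by omega) (by omega)).mp hv', hlt⟩
  · rintro ⟨c, c', hc, hc', hv, hv', hlt⟩
    exact ⟨c, c', hc, hc', (key c i (by omega) (by omega)).mpr hv,
      (key c' (i + 1) (by omega) (by omega)).mpr hv', hlt⟩

set_option maxHeartbeats 1000000 in
lemma swapEntries_comm {i j : ℕ} (h : i + 2 ≤ j ∨ j + 2 ≤ i) (T : Filling) :
    swapEntries i (swapEntries j T) = swapEntries j (swapEntries i T) := by
  funext c
  simp only [swapEntries]
  split_ifs <;> omega

set_option maxHeartbeats 1000000 in
lemma swapEntries_braid (i : ℕ) (T : Filling) :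
    swapEntries i (swapEntries (i + 1) (swapEntries i T)) =
      swapEntries (i + 1) (swapEntries i (swapEntries (i + 1) T)) := by
  funext c
  simp only [swapEntries]
  split_ifs <;> omega

end Aux

theorem piA_hecke_relations (n : ℕ) (α : List ℕ) (hα : IsComposition α n) :
    (∀ i, 1 ≤ i → i ≤ n - 1 →
      ∀ T : Filling, IsSIT α T → piA α i (piA α i T) = piA α i T) ∧
    (∀ i j, 1 ≤ i → i ≤ n - 1 → 1 ≤ j → j ≤ n - 1 → (i + 2 ≤ j ∨ j + 2 ≤ i) →
      ∀ T : Filling, IsSIT α T → piA α i (piA α j T) = piA α j (piA α i T)) ∧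
    (∀ i, 1 ≤ i → i + 1 ≤ n - 1 →
      ∀ T : Filling, IsSIT α T →
        piA α i (piA α (i + 1) (piA α i T)) = piA α (i + 1) (piA α i (piA α (i + 1) T))) := by
  refine ⟨?_, ?_, ?_⟩
  · -- idempotence
    intro i _ _ T hT
    obtain ⟨⟨_, _, hinj, _⟩, _, _⟩ := hT
    by_cases h : SuccBelow α T i
    · obtain ⟨c, c', hc, hc', hv, hv', hlt⟩ := h
      have p : piA α i T = swapEntries i T := by
        unfold piA; rw [if_pos ⟨c, c', hc, hc', hv, hv', hlt⟩]
      rw [p]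
      rw [piA_eq_of (inj_swap hinj i) hc' hc (swapEntries_val_snd hv')
        (swapEntries_val_fst hv), if_neg (by omega)]
    · simp [piA, h]
  · -- commutation
    intro i j _ _ _ _ hd T _
    have sbi : SuccBelow α (swapEntries j T) i ↔ SuccBelow α T i :=
      succBelow_swap_of_disjoint hd
    have sbj : SuccBelow α (swapEntries i T) j ↔ SuccBelow α T j :=
      succBelow_swap_of_disjoint hd.symm
    have hcomm := swapEntries_comm hd T
    by_cases hbi : SuccBelow α T i <;> by_cases hbj : SuccBelow α T j <;>
      simp [piA, hbi, hbj, sbi, sbj, hcomm]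
  · -- braid
    intro i hi hi' T hT
    obtain ⟨⟨_, _, hinj, hsurj⟩, _, _⟩ := hT
    obtain ⟨c1, hc1, e1⟩ := hsurj i (by omega) (by rw [hα.2]; omega)
    obtain ⟨c2, hc2, e2⟩ := hsurj (i + 1) (by omega) (by rw [hα.2]; omega)
    obtain ⟨c3, hc3, e3⟩ := hsurj (i + 2) (by omega) (by rw [hα.2]; omega)
    have key1 : piA α i T = if c2.1 < c1.1 then swapEntries i T else T :=
      piA_eq_of hinj hc1 hc2 e1 e2
    have key2 : piA α (i + 1) T = if c3.1 < c2.1 then swapEntries (i + 1) T else T :=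
      piA_eq_of hinj hc2 hc3 e2 (by rw [e3])
    have inj1 := inj_swap hinj i
    have injV1 := inj_swap hinj (i + 1)
    -- values in swapEntries i T
    have u11 : swapEntries i T c1 = i + 1 := swapEntries_val_fst e1
    have u12 : swapEntries i T c2 = i := swapEntries_val_snd e2
    have u13 : swapEntries i T c3 = i + 2 := swapEntries_val_other e3 (by omega) (by omega)
    -- values in swapEntries (i+1) T
    have v11 : swapEntries (i + 1) T c1 = i := swapEntries_val_other e1 (by omega) (by omega)
    have v12 : swapEntries (i + 1) T c2 = i + 2 := by
      have := swapEntries_val_fst (m := i + 1) e2; omega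
    have v13 : swapEntries (i + 1) T c3 = i + 1 := swapEntries_val_snd (by rw [e3])
    by_cases h1 : c2.1 < c1.1
    · have p1 : piA α i T = swapEntries i T := by rw [key1, if_pos h1]
      rw [p1]
      have q : piA α (i + 1) (swapEntries i T) =
          if c3.1 < c1.1 then swapEntries (i + 1) (swapEntries i T) else swapEntries i T :=
        piA_eq_of inj1 hc1 hc3 u11 (by rw [u13])
      by_cases h2 : c3.1 < c1.1
      · rw [q, if_pos h2]
        have inj2 := inj_swap inj1 (i + 1)
        have w2 : swapEntries (i + 1) (swapEntries i T) c2 = i :=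
          swapEntries_val_other u12 (by omega) (by omega)
        have w3 : swapEntries (i + 1) (swapEntries i T) c3 = i + 1 :=
          swapEntries_val_snd (m := i + 1) (T := swapEntries i T) (c := c3) (by rw [u13])
        have r : piA α i (swapEntries (i + 1) (swapEntries i T)) =
            if c3.1 < c2.1 then swapEntries i (swapEntries (i + 1) (swapEntries i T))
            else swapEntries (i + 1) (swapEntries i T) :=
          piA_eq_of inj2 hc2 hc3 w2 w3
        by_cases h3 : c3.1 < c2.1
        · rw [r, if_pos h3, key2, if_pos h3]
          have s : piA α i (swapEntries (i + 1) T) =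
              if c3.1 < c1.1 then swapEntries i (swapEntries (i + 1) T)
              else swapEntries (i + 1) T :=
            piA_eq_of injV1 hc1 hc3 v11 v13
          rw [s, if_pos h2]
          have injW := inj_swap injV1 i
          have x1 : swapEntries i (swapEntries (i + 1) T) c1 = i + 1 :=
            swapEntries_val_fst v11
          have x2 : swapEntries i (swapEntries (i + 1) T) c2 = i + 2 :=
            swapEntries_val_other v12 (by omega) (by omega)
          have t : piA α (i + 1) (swapEntries i (swapEntries (i + 1) T)) =
              if c2.1 < c1.1 then
                swapEntries (i + 1) (swapEntries i (swapEntries (i + 1) T))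
              else swapEntries i (swapEntries (i + 1) T) :=
            piA_eq_of injW hc1 hc2 x1 (by rw [x2])
          rw [t, if_pos h1]
          exact swapEntries_braid i T
        · rw [r, if_neg h3, key2, if_neg h3, p1, q, if_pos h2]
      · rw [q, if_neg h2]
        have r : piA α i (swapEntries i T) =
            if c1.1 < c2.1 then swapEntries i (swapEntries i T) else swapEntries i T :=
          piA_eq_of inj1 hc2 hc1 u12 u11
        rw [r, if_neg (by omega), key2, if_neg (by omega), p1, q, if_neg h2]
    · have p1 : piA α i T = T := by rw [key1, if_neg h1]
      rw [p1]
      by_cases h2 : c3.1 < c2.1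
      · rw [key2, if_pos h2]
        have s : piA α i (swapEntries (i + 1) T) =
            if c3.1 < c1.1 then swapEntries i (swapEntries (i + 1) T)
            else swapEntries (i + 1) T :=
          piA_eq_of injV1 hc1 hc3 v11 v13
        by_cases h3 : c3.1 < c1.1
        · rw [s, if_pos h3]
          have injW := inj_swap injV1 i
          have x1 : swapEntries i (swapEntries (i + 1) T) c1 = i + 1 :=
            swapEntries_val_fst v11
          have x2 : swapEntries i (swapEntries (i + 1) T) c2 = i + 2 :=
            swapEntries_val_other v12 (by omega) (by omega)
          have t : piA α (i + 1) (swapEntries i (swapEntries (i + 1) T)) =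
              if c2.1 < c1.1 then
                swapEntries (i + 1) (swapEntries i (swapEntries (i + 1) T))
              else swapEntries i (swapEntries (i + 1) T) :=
            piA_eq_of injW hc1 hc2 x1 (by rw [x2])
          rw [t, if_neg h1]
        · rw [s, if_neg h3]
          have t : piA α (i + 1) (swapEntries (i + 1) T) =
              if c2.1 < c3.1 then swapEntries (i + 1) (swapEntries (i + 1) T)
              else swapEntries (i + 1) T :=
            piA_eq_of injV1 hc3 hc2 v13 (by rw [v12])
          rw [t, if_neg (by omega)]
      · rw [key2, if_neg h2, p1, key2, if_neg h2]

end ImmHecke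
end
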